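/- arXiv:2409.18420 — 5 statements merged into one kernel-verified Lean document; each statement's English description precedes it below -/
import Mathlib

section
/- Let n, M, N ≥ 1 and d = 2^n. Suppose C = Σ_{r ∈ Perm(1,…,M+N)} C_{P r F}, where each C_{P r F} is a positive semidefinite matrix on P ⊗ (⊗_{i=1}^M I_i ⊗ O_i) ⊗ (⊗_{j=1}^N I′_j ⊗ O′_j) ⊗ F (all I_i, O_i, I′_j, O′_j, P_T, F_T ≅ ℂ^d; P_C, F_C ≅ ℂ²; P = P_C ⊗ P_T, F = F_C ⊗ F_T), and suppose C ∗ (A^{⊗M} ⊗ B^{⊗N}) = |S_SWITCH⟩⟨S_SWITCH| ∗ (A ⊗ B) for all Choi matrices A and B of mixed unitary n-qubit channels (or, if N = 1, for all mixed unitary A and all B = |V⟩⟩⟨⟨V| with V unitary). Then each C_{P r F} admits a decomposition C_{P r F} = Σ_a |C_r^{(a)}⟩⟨C_r^{(a)}| such that for every a, every permutation r, and all n-qubit unitaries U_1,…,U_M, V_1,…,V_N there exist complex numbers ξ^{(a),r}_{kl} (depending on the unitaries) with |C_r^{(a)}⟩ ∗ (|U_1⟩⟩ ⊗ ⋯ ⊗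 |U_M⟩⟩ ⊗ |V_1⟩⟩ ⊗ ⋯ ⊗ |V_N⟩⟩) = Σ_{k=1}^M Σ_{l=1}^N ξ^{(a),r}_{kl} |S_SWITCH⟩ ∗ (|U_k⟩⟩ ⊗ |V_l⟩⟩). -/
/-
Fix unitaries `U_k`, `V_l` and feed the uniform mixtures `A = M⁻¹ Σ_k |U_k⟩⟩⟨⟨U_k|` and
`B = N⁻¹ Σ_l |V_l⟩⟩⟨⟨V_l|` into the hypothesis. Expanding `A^{⊗M} ⊗ B^{⊗N}`, both sides become
positive combinations of rank-one operators: `|L⟩⟨L|` with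
`L = |C_r^{(a)}⟩ ∗ (⊗_i |U_{g i}⟩⟩ ⊗ ⊗_j |V_{h j}⟩⟩)` on the left, and
`|S_SWITCH⟩ ∗ (|U_k⟩⟩ ⊗ |V_l⟩⟩)` on the right. A vector orthogonal to every right-hand vector
therefore kills the quadratic form of the left-hand side, hence is orthogonal to every `L`, in
particular to the one with `g = h = id`. So `|C_r^{(a)}⟩ ∗ (⊗_i |U_i⟩⟩ ⊗ ⊗_j |V_j⟩⟩)` lies in the
double orthogonal complement of the span of the switch vectors, which is that span.
-/

/-- Index of `ℂ^d` with `d = 2^n`. -/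
abbrev Dix (n : ℕ) := Fin (2 ^ n)
/-- Index of a slot `I ⊗ O` (two copies of `ℂ^{2^n}`). -/
abbrev Sl (n : ℕ) := Dix n × Dix n
/-- Index of `P = P_C ⊗ P_T` (resp. `F = F_C ⊗ F_T`): `ℂ² ⊗ ℂ^{2^n}`. -/
abbrev PFix (n : ℕ) := Fin 2 × Dix n

/-- Choi vector `|A⟩⟩ = Σ_i e_i ⊗ A e_i`: component at `(i, j)` is `A j i`. -/
noncomputable def choiV {n : ℕ} (A : Matrix (Dix n) (Dix n) ℂ) : Sl n → ℂ :=
  fun x => A x.2 x.1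

/-- Component of the switch Choi vector `|S_SWITCH⟩` at `P`-index `p`, `(I,O)`-index `io`,
`(I′,O′)`-index `jo` and `F`-index `f`:
`|S⟩ = |0⟩|0⟩|1⟩⟩^{P_T I}|1⟩⟩^{O I′}|1⟩⟩^{O′ F_T} + |1⟩|1⟩|1⟩⟩^{P_T I′}|1⟩⟩^{O′ I}|1⟩⟩^{O F_T}`. -/
noncomputable def swVec {n : ℕ} (p : PFix n) (io jo : Sl n) (f : PFix n) : ℂ :=
  (if p.1 = 0 ∧ f.1 = 0 ∧ p.2 = io.1 ∧ io.2 = jo.1 ∧ jo.2 = f.2 then 1 else 0) +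
  (if p.1 = 1 ∧ f.1 = 1 ∧ p.2 = jo.1 ∧ jo.2 = io.1 ∧ io.2 = f.2 then 1 else 0)

/-- The contraction `|S_SWITCH⟩ ∗ (|U⟩⟩ ⊗ |V⟩⟩)`, a vector on `P ⊗ F`. -/
noncomputable def swLink {n : ℕ} (U V : Matrix (Dix n) (Dix n) ℂ) : PFix n × PFix n → ℂ :=
  fun pf => ∑ io : Sl n, ∑ jo : Sl n, swVec pf.1 io jo pf.2 * choiV U io * choiV V jo

open scoped ComplexConjugate ComplexOrder

/-- Index of the full space `P ⊗ (⊗_{i=1}^M I_i ⊗ O_i) ⊗ (⊗_{j=1}^N I′_j ⊗ O′_j) ⊗ F`. -/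
abbrev FullIx (n M N : ℕ) := PFix n × (Fin M → Sl n) × (Fin N → Sl n) × PFix n

/-- The contraction `|C⟩ ∗ (|U_1⟩⟩ ⊗ ⋯ ⊗ |U_M⟩⟩ ⊗ |V_1⟩⟩ ⊗ ⋯ ⊗ |V_N⟩⟩)`, a vector on `P ⊗ F`. -/
noncomputable def linkC2 {n M N : ℕ} (C : FullIx n M N → ℂ)
    (U : Fin M → Matrix (Dix n) (Dix n) ℂ) (V : Fin N → Matrix (Dix n) (Dix n) ℂ) :
    PFix n × PFix n → ℂ :=
  fun pf => ∑ s : Fin M → Sl n, ∑ t : Fin N → Sl n,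
    C (pf.1, s, t, pf.2) * (∏ i, choiV (U i) (s i)) * ∏ j, choiV (V j) (t j)

/-- The matrix link product `C ∗ (A^{⊗M} ⊗ B^{⊗N})`, written entrywise:
the `i`-th copy of `A` is inserted on `I_i ⊗ O_i`, the `j`-th copy of `B` on `I′_j ⊗ O′_j`,
and all slot systems are contracted, leaving an operator on `P ⊗ F`. -/
noncomputable def linkMat {n M N : ℕ} (C : Matrix (FullIx n M N) (FullIx n M N) ℂ)
    (A B : Matrix (Sl n) (Sl n) ℂ) :
    Matrix (PFix n × PFix n) (PFix n × PFix n) ℂ :=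
  fun x y => ∑ s : Fin M → Sl n, ∑ s' : Fin M → Sl n, ∑ t : Fin N → Sl n, ∑ t' : Fin N → Sl n,
    C ((x.1, s, t, x.2)) ((y.1, s', t', y.2)) *
      (∏ i, A (s i) (s' i)) * ∏ j, B (t j) (t' j)

/-- The matrix link product `|S_SWITCH⟩⟨S_SWITCH| ∗ (A ⊗ B)`, an operator on `P ⊗ F`. -/
noncomputable def switchMat {n : ℕ} (A B : Matrix (Sl n) (Sl n) ℂ) :
    Matrix (PFix n × PFix n) (PFix n × PFix n) ℂ :=
  fun x y => ∑ io : Sl n, ∑ io' : Sl n, ∑ jo : Sl n, ∑ jo' : Sl n,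
    swVec x.1 io jo x.2 * conj (swVec y.1 io' jo' y.2) * A io io' * B jo jo'

/-- `A` is the Choi matrix of a mixed unitary channel:
`A = Σ_j p_j |U_j⟩⟩⟨⟨U_j|` with `p_j ≥ 0`, `Σ_j p_j = 1`, `U_j` unitary. -/
def IsMixedUnitaryChoi {n : ℕ} (A : Matrix (Sl n) (Sl n) ℂ) : Prop :=
  ∃ (m : ℕ) (p : Fin m → ℝ) (U : Fin m → Matrix (Dix n) (Dix n) ℂ),
    (∀ j, 0 ≤ p j) ∧ (∑ j, p j = 1) ∧
    (∀ j, U j ∈ Matrix.unitaryGroup (Dix n) ℂ) ∧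
    A = ∑ j, (p j : ℂ) • Matrix.vecMulVec (choiV (U j)) (star (choiV (U j)))

open Matrix

lemma prod_sum_smul_vecMulVec_apply {R σ ι κ : Type*} [CommSemiring R] [StarRing R] [Fintype σ]
    [DecidableEq σ] [Fintype κ] (p : κ → R) (a : κ → ι → R) (s s' : σ → ι) :
    ∏ i, (∑ k, p k • vecMulVec (a k) (star (a k))) (s i) (s' i) =
      ∑ g : σ → κ, (∏ i, p (g i)) * ((∏ i, a (g i) (s i)) * star (∏ i, a (g i) (s' i))) := by
  simp only [Matrix.sum_apply, Matrix.smul_apply, vecMulVec_apply, Pi.star_apply, smul_eq_mul,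
    Finset.prod_univ_sum, Fintype.piFinset_univ, star_prod, Finset.prod_mul_distrib]

lemma dotProduct_sum_smul_vecMulVec_mulVec {R ι κ : Type*} [CommSemiring R] [StarRing R]
    [Fintype κ] (s : Finset ι) (c : ι → R) (x : ι → κ → R) (w : κ → R) :
    star w ⬝ᵥ ((∑ i ∈ s, c i • vecMulVec (x i) (star (x i))) *ᵥ w) =
      ∑ i ∈ s, c i * ((star w ⬝ᵥ x i) * star (star w ⬝ᵥ x i)) := by
  simp only [Matrix.sum_mulVec, smul_mulVec, vecMulVec_mulVec, dotProduct_sum, dotProduct_smul]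
  refine Finset.sum_congr rfl fun i _ => ?_
  simp [star_dotProduct, dotProduct_comm (star w)]

lemma exists_sum_smul_eq_of_forall_dotProduct_eq_zero {𝕜 ι κ : Type*} [RCLike 𝕜] [Fintype ι]
    [Fintype κ] {S : ι → κ → 𝕜} {L : κ → 𝕜}
    (h : ∀ w : κ → 𝕜, (∀ i, star w ⬝ᵥ S i = 0) → star w ⬝ᵥ L = 0) :
    ∃ c : ι → 𝕜, ∑ i, c i • S i = L := by
  let K : Submodule 𝕜 (EuclideanSpace 𝕜 κ) :=
    Submodule.span 𝕜 (Set.range fun i => WithLp.toLp 2 (S i))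
  have hL : WithLp.toLp 2 L ∈ K := by
    rw [← K.orthogonal_orthogonal, Submodule.mem_orthogonal]
    intro w hw
    have hwS : ∀ i, star w.ofLp ⬝ᵥ S i = 0 := fun i => by
      simpa [EuclideanSpace.inner_eq_star_dotProduct, dotProduct_comm] using
        (K.mem_orthogonal' w).mp hw _ (Submodule.subset_span ⟨i, rfl⟩)
    simpa [EuclideanSpace.inner_eq_star_dotProduct, dotProduct_comm] using h w.ofLp hwS
  obtain ⟨c, hc⟩ := (Submodule.mem_span_range_iff_exists_fun 𝕜).mp hL
  exact ⟨c, by simpa using congrArg WithLp.ofLp hc⟩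

noncomputable def mixtureChoi {n : ℕ} {κ : Type*} [Fintype κ] (p : κ → ℂ)
    (U : κ → Matrix (Dix n) (Dix n) ℂ) : Matrix (Sl n) (Sl n) ℂ :=
  ∑ k, p k • vecMulVec (choiV (U k)) (star (choiV (U k)))

lemma linkMat_sum {n M N : ℕ} {ι : Type*} [Fintype ι]
    (C : ι → Matrix (FullIx n M N) (FullIx n M N) ℂ) (A B : Matrix (Sl n) (Sl n) ℂ) :
    linkMat (∑ i, C i) A B = ∑ i, linkMat (C i) A B := by
  ext x y
  simp only [linkMat, Matrix.sum_apply, Finset.sum_mul]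
  simp only [Finset.sum_comm (t := (Finset.univ : Finset ι))]

lemma linkMat_vecMulVec {n M N : ℕ} {κ₁ κ₂ : Type*} [Fintype κ₁] [Fintype κ₂]
    (u : FullIx n M N → ℂ) (p : κ₁ → ℂ) (U : κ₁ → Matrix (Dix n) (Dix n) ℂ)
    (q : κ₂ → ℂ) (V : κ₂ → Matrix (Dix n) (Dix n) ℂ) :
    linkMat (vecMulVec u (star u)) (mixtureChoi p U) (mixtureChoi q V) =
      ∑ gh : (Fin M → κ₁) × (Fin N → κ₂), ((∏ i, p (gh.1 i)) * ∏ j, q (gh.2 j)) •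
        vecMulVec (linkC2 u (U ∘ gh.1) (V ∘ gh.2)) (star (linkC2 u (U ∘ gh.1) (V ∘ gh.2))) := by
  ext x y
  simp only [linkMat, mixtureChoi, prod_sum_smul_vecMulVec_apply]
  simp only [Matrix.sum_apply, Matrix.smul_apply, vecMulVec_apply, Pi.star_apply, linkC2, star_sum,
    Finset.sum_mul_sum, smul_eq_mul, Function.comp_apply, Fintype.sum_prod_type]
  simp only [Finset.mul_sum, Finset.sum_mul]
  simp only [Finset.sum_comm (t := (Finset.univ : Finset (Fin N → κ₂)))]
  simp only [Finset.sum_comm (t := (Finset.univ : Finset (Fin M → κ₁)))]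
  congr! 6 with g h s s' t t'
  simp only [star_mul]
  ring

/-- `|S_SWITCH⟩` as a process with one `A`-slot and one `B`-slot, so that `switchMat` and `swLink`
become instances of `linkMat` and `linkC2`. -/
noncomputable def switchChoi {n : ℕ} : FullIx n 1 1 → ℂ :=
  fun z => swVec z.1 (z.2.1 0) (z.2.2.1 0) z.2.2.2

lemma switchMat_eq_linkMat {n : ℕ} (A B : Matrix (Sl n) (Sl n) ℂ) :
    switchMat A B = linkMat (vecMulVec switchChoi (star switchChoi)) A B := by
  ext x y
  simp only [switchMat, linkMat, vecMulVec_apply, switchChoi, Pi.star_apply, RCLike.star_def,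
    Fin.prod_univ_one]
  simp only [← (Equiv.funUnique (Fin 1) (Sl n)).symm.sum_comp]
  rfl

lemma linkC2_switchChoi {n : ℕ} (U V : Fin 1 → Matrix (Dix n) (Dix n) ℂ) :
    linkC2 switchChoi U V = swLink (U 0) (V 0) := by
  ext x
  simp only [linkC2, switchChoi, swLink, Fin.prod_univ_one]
  simp only [← (Equiv.funUnique (Fin 1) (Sl n)).symm.sum_comp]
  rfl

lemma dotProduct_linkC2_eq_zero {n M N : ℕ} {ι : Type*} [Fintype ι] (v : ι → FullIx n M N → ℂ)
    {p : Fin M → ℂ} {q : Fin N → ℂ} (hp : ∀ k, 0 < p k) (hq : ∀ l, 0 < q l)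
    {U : Fin M → Matrix (Dix n) (Dix n) ℂ} {V : Fin N → Matrix (Dix n) (Dix n) ℂ}
    (hCS : linkMat (∑ i, vecMulVec (v i) (star (v i))) (mixtureChoi p U) (mixtureChoi q V) =
      switchMat (mixtureChoi p U) (mixtureChoi q V))
    {w : PFix n × PFix n → ℂ} (hw : ∀ k l, star w ⬝ᵥ swLink (U k) (V l) = 0) (i : ι) :
    star w ⬝ᵥ linkC2 (v i) U V = 0 := by
  have hswitch : star w ⬝ᵥ (switchMat (mixtureChoi p U) (mixtureChoi q V) *ᵥ w) = 0 := by
    rw [switchMat_eq_linkMat, linkMat_vecMulVec, dotProduct_sum_smul_vecMulVec_mulVec]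
    simp [linkC2_switchChoi, hw]
  rw [← hCS, linkMat_sum] at hswitch
  simp only [linkMat_vecMulVec, ← Finset.sum_product', dotProduct_sum_smul_vecMulVec_mulVec]
    at hswitch
  have hP : 0 < ∏ k, p k := Finset.prod_pos fun k _ => hp k
  have hQ : 0 < ∏ l, q l := Finset.prod_pos fun l _ => hq l
  have hterm := (Finset.sum_eq_zero_iff_of_nonneg fun x _ => mul_nonneg
    (mul_nonneg (Finset.prod_nonneg fun k _ => (hp _).le) (Finset.prod_nonneg fun l _ => (hq _).le))
    (mul_star_self_nonneg _)).mp hswitch (i, (id, id)) (Finset.mem_univ _)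
  simpa [(mul_pos hP hQ).ne'] using hterm

lemma isMixedUnitaryChoi_uniform {n K : ℕ} (hK : 1 ≤ K) {U : Fin K → Matrix (Dix n) (Dix n) ℂ}
    (hU : ∀ k, U k ∈ unitaryGroup (Dix n) ℂ) :
    IsMixedUnitaryChoi (mixtureChoi (fun _ => (K : ℂ)⁻¹) U) :=
  ⟨K, fun _ => (K : ℝ)⁻¹, U, fun _ => by positivity,
    by simp [Nat.cast_ne_zero.mpr (by omega : K ≠ 0)], hU, by simp [mixtureChoi]⟩

lemma linkMat_eq_switchMat_uniform {n M N : ℕ} (hM : 1 ≤ M) (hN : 1 ≤ N)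
    {C : Matrix (FullIx n M N) (FullIx n M N) ℂ}
    (hsim :
      (∀ A B : Matrix (Sl n) (Sl n) ℂ, IsMixedUnitaryChoi A → IsMixedUnitaryChoi B →
        linkMat C A B = switchMat A B) ∨
      (N = 1 ∧ ∀ (A : Matrix (Sl n) (Sl n) ℂ) (V : Matrix (Dix n) (Dix n) ℂ),
        IsMixedUnitaryChoi A → V ∈ unitaryGroup (Dix n) ℂ →
        linkMat C A (vecMulVec (choiV V) (star (choiV V))) =
          switchMat A (vecMulVec (choiV V) (star (choiV V)))))
    {U : Fin M → Matrix (Dix n) (Dix n) ℂ} {V : Fin N → Matrix (Dix n) (Dix n) ℂ}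
    (hU : ∀ k, U k ∈ unitaryGroup (Dix n) ℂ) (hV : ∀ l, V l ∈ unitaryGroup (Dix n) ℂ) :
    linkMat C (mixtureChoi (fun _ => (M : ℂ)⁻¹) U) (mixtureChoi (fun _ => (N : ℂ)⁻¹) V) =
      switchMat (mixtureChoi (fun _ => (M : ℂ)⁻¹) U) (mixtureChoi (fun _ => (N : ℂ)⁻¹) V) := by
  rcases hsim with hsim | ⟨rfl, hsim⟩
  · exact hsim _ _ (isMixedUnitaryChoi_uniform hM hU) (isMixedUnitaryChoi_uniform hN hV)
  · have hB : mixtureChoi (fun _ => ((1 : ℕ) : ℂ)⁻¹) V =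
        vecMulVec (choiV (V 0)) (star (choiV (V 0))) := by
      simp [mixtureChoi]
    rw [hB]
    exact hsim _ _ (isMixedUnitaryChoi_uniform hM hU) (hV 0)

theorem stmt_2_general (n M N : ℕ) (hM : 1 ≤ M) (hN : 1 ≤ N)
    (Cr : Equiv.Perm (Fin (M + N)) → Matrix (FullIx n M N) (FullIx n M N) ℂ)
    (hpos : ∀ r, (Cr r).PosSemidef)
    (C : Matrix (FullIx n M N) (FullIx n M N) ℂ) (hC : C = ∑ r, Cr r)
    (hsim :
      (∀ A B : Matrix (Sl n) (Sl n) ℂ, IsMixedUnitaryChoi A → IsMixedUnitaryChoi B →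
        linkMat C A B = switchMat A B) ∨
      (N = 1 ∧ ∀ (A : Matrix (Sl n) (Sl n) ℂ) (V : Matrix (Dix n) (Dix n) ℂ),
        IsMixedUnitaryChoi A → V ∈ Matrix.unitaryGroup (Dix n) ℂ →
        linkMat C A (Matrix.vecMulVec (choiV V) (star (choiV V))) =
          switchMat A (Matrix.vecMulVec (choiV V) (star (choiV V))))) :
    ∀ r : Equiv.Perm (Fin (M + N)),
      ∃ (m : ℕ) (v : Fin m → (FullIx n M N → ℂ)),
        Cr r = ∑ a, Matrix.vecMulVec (v a) (star (v a)) ∧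
        ∀ (a : Fin m) (U : Fin M → Matrix (Dix n) (Dix n) ℂ)
            (V : Fin N → Matrix (Dix n) (Dix n) ℂ),
          (∀ i, U i ∈ Matrix.unitaryGroup (Dix n) ℂ) →
          (∀ j, V j ∈ Matrix.unitaryGroup (Dix n) ℂ) →
          ∃ ξ : Fin M → Fin N → ℂ,
            linkC2 (v a) U V = fun pf => ∑ k, ∑ l, ξ k l * swLink (U k) (V l) pf := by
  choose m v hv using fun r => posSemidef_iff_eq_sum_vecMulVec.mp (hpos r)
  have hCv : C = ∑ x : Σ r, Fin (m r), vecMulVec (v x.1 x.2) (star (v x.1 x.2)) := by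
    rw [hC, Fintype.sum_sigma]
    exact Finset.sum_congr rfl fun r _ => hv r
  refine fun r => ⟨m r, v r, hv r, fun a U V hU hV => ?_⟩
  have hCS := linkMat_eq_switchMat_uniform hM hN hsim hU hV
  rw [hCv] at hCS
  have hweight {K : ℕ} (hK : 1 ≤ K) : 0 < (K : ℂ)⁻¹ := inv_pos.mpr (Nat.cast_pos.mpr hK)
  obtain ⟨c, hc⟩ := exists_sum_smul_eq_of_forall_dotProduct_eq_zero
    (S := fun kl : Fin M × Fin N => swLink (U kl.1) (V kl.2)) (L := linkC2 (v r a) U V)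
    fun w hw => dotProduct_linkC2_eq_zero _ (fun _ => hweight hM) (fun _ => hweight hN) hCS
      (fun k l => hw (k, l)) ⟨r, a⟩
  refine ⟨fun k l => c (k, l), ?_⟩
  rw [← hc]
  ext pf
  simp [Fintype.sum_prod_type]

/-- if `C = Σ_r C_r` with each `C_r` positive semidefinite (one matrix for
each permutation `r` of the `M + N` slots), and `C ∗ (A^{⊗M} ⊗ B^{⊗N}) = |S⟩⟨S| ∗ (A ⊗ B)`
for all mixed unitary Choi matrices `A, B` (or, if `N = 1`, for all mixed unitary `A` and
all unitary `B`), then each `C_r` decomposes as `Σ_a |C_r^{(a)}⟩⟨C_r^{(a)}|` where every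
contraction `|C_r^{(a)}⟩ ∗ (⊗_i |U_i⟩⟩ ⊗ ⊗_j |V_j⟩⟩)` is a linear combination of the
vectors `|S_SWITCH⟩ ∗ (|U_k⟩⟩ ⊗ |V_l⟩⟩)`. -/
theorem stmt_2 (n M N : ℕ) (hn : 1 ≤ n) (hM : 1 ≤ M) (hN : 1 ≤ N)
    (Cr : Equiv.Perm (Fin (M + N)) → Matrix (FullIx n M N) (FullIx n M N) ℂ)
    (hpos : ∀ r, (Cr r).PosSemidef)
    (C : Matrix (FullIx n M N) (FullIx n M N) ℂ) (hC : C = ∑ r, Cr r)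
    (hsim :
      (∀ A B : Matrix (Sl n) (Sl n) ℂ, IsMixedUnitaryChoi A → IsMixedUnitaryChoi B →
        linkMat C A B = switchMat A B) ∨
      (N = 1 ∧ ∀ (A : Matrix (Sl n) (Sl n) ℂ) (V : Matrix (Dix n) (Dix n) ℂ),
        IsMixedUnitaryChoi A → V ∈ Matrix.unitaryGroup (Dix n) ℂ →
        linkMat C A (Matrix.vecMulVec (choiV V) (star (choiV V))) =
          switchMat A (Matrix.vecMulVec (choiV V) (star (choiV V))))) :
    ∀ r : Equiv.Perm (Fin (M + N)),
      ∃ (m : ℕ) (v : Fin m → (FullIx n M N → ℂ)),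
        Cr r = ∑ a, Matrix.vecMulVec (v a) (star (v a)) ∧
        ∀ (a : Fin m) (U : Fin M → Matrix (Dix n) (Dix n) ℂ)
            (V : Fin N → Matrix (Dix n) (Dix n) ℂ),
          (∀ i, U i ∈ Matrix.unitaryGroup (Dix n) ℂ) →
          (∀ j, V j ∈ Matrix.unitaryGroup (Dix n) ℂ) →
          ∃ ξ : Fin M → Fin N → ℂ,
            linkC2 (v a) U V = fun pf => ∑ k, ∑ l, ξ k l * swLink (U k) (V l) pf :=
  stmt_2_general n M N hM hN Cr hpos C hC hsim
end

section
/- Let d ≥ 2, M, N ≥ 1 with max(M, N) ≤ d. Let P_T and I_1,…,I_M, I′_1,…,I′_N be copies of ℂ^d, and let an additional copy O′ of ℂ^d stand for all systems O′_k (canonically identified). For i, j ∈ {1,…,M}, k, l ∈ {1,…,N}, α, β ∈ {1,…,d}^{N−1}, γ, δ ∈ {1,…,d}^{M−1}, consider the linear operator on H := P_T ⊗ (⊗_{i=1}^M I_i) ⊗ (⊗_{k=1}^N I′_k) ⊗ O′ given by |1⟩⟩^{P_T I′_k}⟨⟨1|^{P_T I′_l} ⊗ |1⟩⟩^{O′ I_i}⟨⟨1|^{O′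 I_j} ⊗ |α⟩^{I′_{\bar k}}⟨β|^{I′_{\bar l}} ⊗ |γ⟩^{I_{\bar i}}⟨δ|^{I_{\bar j}}, where I′_{\bar k} denotes the tensor product of all I′_{k′} with k′ ≠ k and I_{\bar i} the tensor product of all I_{i′} with i′ ≠ i, and |α⟩, |β⟩, |γ⟩, |δ⟩ are the corresponding standard basis vectors. Then the family of all these operators, over all (i, j, k, l, α, β, γ, δ), is linearly independent. -/
/-- The operator
`|1⟩⟩^{P_T I′_k}⟨⟨1|^{P_T I′_l} ⊗ |1⟩⟩^{O′ I_i}⟨⟨1|^{O′ I_j} ⊗ |α⟩^{I′_k̄}⟨β|^{I′_l̄} ⊗ |γ⟩^{I_ī}⟨δ|^{I_j̄}`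
on `H = P_T ⊗ (⊗_{i=1}^M I_i) ⊗ (⊗_{k=1}^N I′_k) ⊗ O′` (all factors `ℂ^d`), entrywise.
The space is indexed by tuples `(p, g, h, o)` with `p : Fin d` the `P_T` index,
`g : Fin M → Fin d` the `I` indices, `h : Fin N → Fin d` the `I′` indices and
`o : Fin d` the `O′` index. -/
noncomputable def op6 (d M N : ℕ)
    (t : Σ i : Fin M, Σ j : Fin M, Σ k : Fin N, Σ l : Fin N,
      ({x : Fin N // x ≠ k} → Fin d) × ({x : Fin N // x ≠ l} → Fin d) ×
      ({x : Fin M // x ≠ i} → Fin d) × ({x : Fin M // x ≠ j} → Fin d)) :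
    Matrix (Fin d × (Fin M → Fin d) × (Fin N → Fin d) × Fin d)
      (Fin d × (Fin M → Fin d) × (Fin N → Fin d) × Fin d) ℂ :=
  fun x y =>
    match x, y, t with
    | (p, g, h, o), (p', g', h', o'), ⟨i, j, k, l, α, β, γ, δ⟩ =>
      (if p = h k ∧ o = g i ∧ (∀ s : {x : Fin N // x ≠ k}, h s.1 = α s) ∧
          (∀ s : {x : Fin M // x ≠ i}, g s.1 = γ s) then 1 else 0) *
      (if p' = h' l ∧ o' = g' j ∧ (∀ s : {x : Fin N // x ≠ l}, h' s.1 = β s) ∧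
          (∀ s : {x : Fin M // x ≠ j}, g' s.1 = δ s) then 1 else 0)

def extFun {n d : ℕ} (k : Fin n) (α : {x : Fin n // x ≠ k} → Fin d) (p : Fin d) :
    Fin n → Fin d := fun x => if hx : x = k then p else α ⟨x, hx⟩

lemma exists_avoid {n d : ℕ} (hnd : n ≤ d) (k : Fin n)
    (α : {x : Fin n // x ≠ k} → Fin d) : ∃ p : Fin d, ∀ s, α s ≠ p := by
  by_contra hcon
  push_neg at hcon
  have hsurj : Function.Surjective α := fun p => hcon p
  have h1 := Fintype.card_le_of_surjective α hsurj
  have h2 : Fintype.card {x : Fin n // x ≠ k} < Fintype.card (Fin n) :=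
    Fintype.card_subtype_lt (x := k) (by simp)
  simp [Fintype.card_fin] at h1 h2
  omega

lemma pair_eq {n d : ℕ} (k k' : Fin n) (α : {x : Fin n // x ≠ k} → Fin d)
    (α' : {x : Fin n // x ≠ k'} → Fin d) (p : Fin d) (hp : ∀ s, α s ≠ p)
    (h1 : p = extFun k α p k') (h2 : ∀ s : {x : Fin n // x ≠ k'}, extFun k α p s.1 = α' s) :
    (⟨k', α'⟩ : Σ m : Fin n, ({x : Fin n // x ≠ m} → Fin d)) = ⟨k, α⟩ := by
  have hk : k' = k := by
    by_contra hne
    exact hp ⟨k', hne⟩ (by simpa [extFun, hne] using h1.symm)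
  subst hk
  have hα : α' = α := by
    funext s
    have h3 := h2 s
    rw [extFun, dif_neg s.2] at h3
    exact h3.symm
  rw [hα]

lemma extFun_self {n d : ℕ} (k : Fin n) (α : {x : Fin n // x ≠ k} → Fin d) (p : Fin d) :
    extFun k α p k = p := by simp [extFun]

lemma extFun_off {n d : ℕ} (k : Fin n) (α : {x : Fin n // x ≠ k} → Fin d) (p : Fin d)
    (s : {x : Fin n // x ≠ k}) : extFun k α p s.1 = α s := by
  rw [extFun, dif_neg s.2]

set_option synthInstance.maxSize 512 in
instance op6IndexFintype (d M N : ℕ) :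
    Fintype (Σ i : Fin M, Σ j : Fin M, Σ k : Fin N, Σ l : Fin N,
      ({x : Fin N // x ≠ k} → Fin d) × ({x : Fin N // x ≠ l} → Fin d) ×
      ({x : Fin M // x ≠ i} → Fin d) × ({x : Fin M // x ≠ j} → Fin d)) := by
  infer_instance

/-- for `max(M, N) ≤ d`, the family of operators
`|1⟩⟩^{P_T I′_k}⟨⟨1|^{P_T I′_l} ⊗ |1⟩⟩^{O′ I_i}⟨⟨1|^{O′ I_j} ⊗ |α⟩^{I′_k̄}⟨β|^{I′_l̄} ⊗ |γ⟩^{I_ī}⟨δ|^{I_j̄}`,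
over all `(i, j, k, l, α, β, γ, δ)`, is linearly independent. -/
theorem stmt_6 (d M N : ℕ) (hd : 2 ≤ d) (hM : 1 ≤ M) (hN : 1 ≤ N)
    (hmax : max M N ≤ d) :
    LinearIndependent ℂ (op6 d M N) := by
  classical
  have hMd : M ≤ d := le_trans (le_max_left M N) hmax
  have hNd : N ≤ d := le_trans (le_max_right M N) hmax
  rw [Fintype.linearIndependent_iff]
  intro c hc t
  choose pN hpN using fun (k : Fin N) (α : {x : Fin N // x ≠ k} → Fin d) =>
    exists_avoid hNd k α
  choose pM hpM using fun (i : Fin M) (γ : {x : Fin M // x ≠ i} → Fin d) =>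
    exists_avoid hMd i γ
  obtain ⟨i, j, k, l, α, β, γ, δ⟩ := t
  have hev := congrFun (congrFun hc
    (pN k α, extFun i γ (pM i γ), extFun k α (pN k α), pM i γ))
    (pN l β, extFun j δ (pM j δ), extFun l β (pN l β), pM j δ)
  rw [Matrix.sum_apply] at hev
  simp only [Matrix.smul_apply, smul_eq_mul, Pi.zero_apply] at hev
  rw [Finset.sum_eq_single (⟨i, j, k, l, α, β, γ, δ⟩ : Σ i : Fin M, Σ j : Fin M,
      Σ k : Fin N, Σ l : Fin N,
      ({x : Fin N // x ≠ k} → Fin d) × ({x : Fin N // x ≠ l} → Fin d) ×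
      ({x : Fin M // x ≠ i} → Fin d) × ({x : Fin M // x ≠ j} → Fin d))] at hev
  · simp only [op6] at hev
    rw [if_pos ⟨(extFun_self k α _).symm, (extFun_self i γ _).symm,
          fun s => extFun_off k α _ s, fun s => extFun_off i γ _ s⟩,
        if_pos ⟨(extFun_self l β _).symm, (extFun_self j δ _).symm,
          fun s => extFun_off l β _ s, fun s => extFun_off j δ _ s⟩,
        mul_one, mul_one] at hev
    exact hev
  · rintro ⟨i', j', k', l', α', β', γ', δ'⟩ - hne
    simp only [op6]
    by_cases hc1 : pN k α = extFun k α (pN k α) k' ∧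
        pM i γ = extFun i γ (pM i γ) i' ∧
        (∀ s : {x : Fin N // x ≠ k'}, extFun k α (pN k α) s.1 = α' s) ∧
        (∀ s : {x : Fin M // x ≠ i'}, extFun i γ (pM i γ) s.1 = γ' s)
    case neg => rw [if_neg hc1, zero_mul, mul_zero]
    by_cases hc2 : pN l β = extFun l β (pN l β) l' ∧
        pM j δ = extFun j δ (pM j δ) j' ∧
        (∀ s : {x : Fin N // x ≠ l'}, extFun l β (pN l β) s.1 = β' s) ∧
        (∀ s : {x : Fin M // x ≠ j'}, extFun j δ (pM j δ) s.1 = δ' s)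
    case neg => rw [if_neg hc2, mul_zero, mul_zero]
    exfalso
    obtain ⟨e1, e2, e3, e4⟩ := hc1
    obtain ⟨f1, f2, f3, f4⟩ := hc2
    have hkα := pair_eq k k' α α' (pN k α) (hpN k α) e1 e3
    have hiγ := pair_eq i i' γ γ' (pM i γ) (hpM i γ) e2 e4
    have hlβ := pair_eq l l' β β' (pN l β) (hpN l β) f1 f3
    have hjδ := pair_eq j j' δ δ' (pM j δ) (hpM j δ) f2 f4
    rw [Sigma.mk.inj_iff] at hkα hiγ hlβ hjδ
    obtain ⟨hk, hα⟩ := hkα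
    obtain ⟨hi, hγ⟩ := hiγ
    obtain ⟨hl, hβ⟩ := hlβ
    obtain ⟨hj, hδ⟩ := hjδ
    subst hk; subst hi; subst hl; subst hj
    rw [heq_iff_eq] at hα hγ hβ hδ
    subst hα; subst hγ; subst hβ; subst hδ
    exact hne rfl
  · intro h
    exact absurd (Finset.mem_univ _) h
end

section
/- Let d ≥ 2 and M ≥ 1 with M ≤ d. Let P_T and I_1,…,I_M be copies of ℂ^d. For i, j ∈ {1,…,M} and α, β ∈ {1,…,d}^{M−1}, consider the linear operator on P_T ⊗ I_1 ⊗ ⋯ ⊗ I_M given by |1⟩⟩^{P_T I_i}⟨⟨1|^{P_T I_j} ⊗ |α⟩^{I_{\bar i}}⟨β|^{I_{\bar j}}, where I_{\bar i} denotes the tensor product of all I_{i′} with i′ ≠ i and |α⟩, |β⟩ are the corresponding standard basis vectors. Then the family of all these operators, over all (i, j, α, β), is linearly independent. -/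
/-- The operator `|1⟩⟩^{P_T I_i}⟨⟨1|^{P_T I_j} ⊗ |α⟩^{I_ī}⟨β|^{I_j̄}` on
`P_T ⊗ I_1 ⊗ ⋯ ⊗ I_M` (all factors `ℂ^d`), written entrywise.  The space is indexed by
pairs `(p, f)` with `p : Fin d` the `P_T` index and `f : Fin M → Fin d` the indices of
`I_1, …, I_M`. -/
noncomputable def op7 (d M : ℕ)
    (t : Σ i : Fin M, Σ j : Fin M,
      ({x : Fin M // x ≠ i} → Fin d) × ({x : Fin M // x ≠ j} → Fin d)) :
    Matrix (Fin d × (Fin M → Fin d)) (Fin d × (Fin M → Fin d)) ℂ :=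
  fun x y =>
    (if x.1 = x.2 t.1 ∧ ∀ s : {x : Fin M // x ≠ t.1}, x.2 s.1 = t.2.2.1 s then 1 else 0) *
    (if y.1 = y.2 t.2.1 ∧ ∀ s : {x : Fin M // x ≠ t.2.1}, y.2 s.1 = t.2.2.2 s then 1 else 0)

lemma exists_pt (d M : ℕ) (hMd : M ≤ d) (hM : 1 ≤ M) (i : Fin M)
    (α : {x : Fin M // x ≠ i} → Fin d) :
    ∃ p : Fin d, ∃ f : Fin M → Fin d,
      (p = f i ∧ ∀ s : {x : Fin M // x ≠ i}, f s.1 = α s) ∧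
      ∀ i', f i' = p → i' = i := by
  have hcard : Fintype.card {x : Fin M // x ≠ i} < Fintype.card (Fin d) := by
    have h1 : Fintype.card {x : Fin M // x ≠ i} = M - 1 := by
      simp [Fintype.card_subtype_compl]
    rw [h1, Fintype.card_fin]
    omega
  have hns : ¬ Function.Surjective α := fun h =>
    absurd (Fintype.card_le_of_surjective α h) (by omega)
  simp only [Function.Surjective, not_forall, not_exists] at hns
  obtain ⟨p, hp⟩ := hns
  classical
  refine ⟨p, fun x => if h : x = i then p else α ⟨x, h⟩, ⟨by simp, ?_⟩, ?_⟩
  · rintro ⟨s, hs⟩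
    simp [hs]
  · intro i' hi'
    by_contra h
    simp only [dif_neg h] at hi'
    exact hp ⟨i', h⟩ hi'

/-- for `M ≤ d`, the family of operators
`|1⟩⟩^{P_T I_i}⟨⟨1|^{P_T I_j} ⊗ |α⟩^{I_ī}⟨β|^{I_j̄}`, over all `(i, j, α, β)`,
is linearly independent. -/
theorem stmt_7 (d M : ℕ) (hd : 2 ≤ d) (hM : 1 ≤ M) (hMd : M ≤ d) :
    LinearIndependent ℂ (op7 d M) := by
  rw [Fintype.linearIndependent_iff]
  rintro g hg ⟨i, j, α, β⟩
  obtain ⟨p, f, ⟨hpf1, hpf2⟩, hpf3⟩ := exists_pt d M hMd hM i α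
  obtain ⟨q, e, ⟨hqe1, hqe2⟩, hqe3⟩ := exists_pt d M hMd hM j β
  have h := congrFun (congrFun hg (p, f)) (q, e)
  simp only [Matrix.sum_apply, Matrix.smul_apply, smul_eq_mul, Matrix.zero_apply] at h
  rw [Finset.sum_eq_single (⟨i, j, α, β⟩ :
      Σ i : Fin M, Σ j : Fin M,
        ({x : Fin M // x ≠ i} → Fin d) × ({x : Fin M // x ≠ j} → Fin d))] at h
  · simpa [op7, hpf1, hpf2, hqe1, hqe2] using h
  · rintro ⟨i', j', α', β'⟩ - hne
    have : op7 d M ⟨i', j', α', β'⟩ (p, f) (q, e) = 0 := by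
      simp only [op7]
      by_cases h1 : p = f i' ∧ ∀ s : {x : Fin M // x ≠ i'}, f s.1 = α' s
      · by_cases h2 : q = e j' ∧ ∀ s : {x : Fin M // x ≠ j'}, e s.1 = β' s
        · exfalso
          obtain ⟨h1a, h1b⟩ := h1
          obtain ⟨h2a, h2b⟩ := h2
          have hi : i' = i := hpf3 i' h1a.symm
          have hj : j' = j := hqe3 j' h2a.symm
          subst hi; subst hj
          apply hne
          have hα : α' = α := by
            funext s; rw [← h1b s, hpf2 s]
          have hβ : β' = β := by
            funext s; rw [← h2b s, hqe2 s]
          rw [hα, hβ]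
        · rw [if_neg h2, mul_zero]
      · rw [if_neg h1, zero_mul]
    rw [this, mul_zero]
  · intro hmem
    exact absurd (Finset.mem_univ _) hmem
end

section
/- Let d ≥ 2 and N ≥ 1 with N ≤ max(2, d − 1). Let O and I′_1,…,I′_N, O′_1,…,O′_N be copies of ℂ^d. For k, l ∈ {1,…,N} and α, β, γ, δ ∈ {1,…,d}^{N−1}, consider the linear operator on O ⊗ (⊗_{k=1}^N I′_k) ⊗ (⊗_{k=1}^N O′_k) given by (|1⟩⟩^{O I′_k}⟨⟨1|^{O I′_l} − (1^O/d) ⊗ 1^{I′_l → I′_k}) ⊗ 1^{O′_l → O′_k} ⊗ |α⟩^{I′_{\bar k}}⟨β|^{I′_{\bar l}} ⊗ |γ⟩^{O′_{\bar k}}⟨δ|^{O′_{\bar l}}, where 1^{A → B} := Σ_m |m⟩^B⟨m|^A, I′_{\bar k} (resp. O′_{\bar k}) denotes the tensor product of all I′_{k′} (resp. O′_{k′}) with k′ ≠ k, and |α⟩, |β⟩, |γ⟩, |δ⟩ are standard basis vectors. Then the family of all these operators, over all (k, l, α, β, γ, δ), is linearly independent. -/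
/-- The operator
`(|1⟩⟩^{O I′_k}⟨⟨1|^{O I′_l} − (1^O/d) ⊗ 1^{I′_l → I′_k}) ⊗ 1^{O′_l → O′_k} ⊗ |α⟩^{I′_k̄}⟨β|^{I′_l̄} ⊗ |γ⟩^{O′_k̄}⟨δ|^{O′_l̄}`
on `O ⊗ (⊗_{k=1}^N I′_k) ⊗ (⊗_{k=1}^N O′_k)` (all factors `ℂ^d`), written entrywise.
The space is indexed by tuples `(o, h, w)` with `o : Fin d` the `O` index,
`h : Fin N → Fin d` the `I′` indices and `w : Fin N → Fin d` the `O′` indices. -/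
noncomputable def op8 (d N : ℕ)
    (t : Σ k : Fin N, Σ l : Fin N,
      ({x : Fin N // x ≠ k} → Fin d) × ({x : Fin N // x ≠ l} → Fin d) ×
      ({x : Fin N // x ≠ k} → Fin d) × ({x : Fin N // x ≠ l} → Fin d)) :
    Matrix (Fin d × (Fin N → Fin d) × (Fin N → Fin d))
      (Fin d × (Fin N → Fin d) × (Fin N → Fin d)) ℂ :=
  fun x y =>
    match x, y, t with
    | (o, h, w), (o', h', w'), ⟨k, l, α, β, γ, δ⟩ =>
      ((if o = h k ∧ o' = h' l then 1 else 0) -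
          ((d : ℂ))⁻¹ * (if o = o' ∧ h k = h' l then 1 else 0)) *
      (if w k = w' l then 1 else 0) *
      (if (∀ s : {x : Fin N // x ≠ k}, h s.1 = α s) ∧
          (∀ s : {x : Fin N // x ≠ l}, h' s.1 = β s) ∧
          (∀ s : {x : Fin N // x ≠ k}, w s.1 = γ s) ∧
          (∀ s : {x : Fin N // x ≠ l}, w' s.1 = δ s) then 1 else 0)

lemma ext_apply_ne {N d : ℕ} {k₀ : Fin N} (c : Fin d)
    (f : {x : Fin N // x ≠ k₀} → Fin d) (s : {x : Fin N // x ≠ k₀}) :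
    (fun k => if hk : k = k₀ then c else f ⟨k, hk⟩) s.1 = f s := by
  simp [s.2]


/-- for `N ≤ max(2, d − 1)`, the family of operators
`(|1⟩⟩^{O I′_k}⟨⟨1|^{O I′_l} − (1^O/d) ⊗ 1^{I′_l → I′_k}) ⊗ 1^{O′_l → O′_k} ⊗ |α⟩⟨β| ⊗ |γ⟩⟨δ|`,
over all `(k, l, α, β, γ, δ)`, is linearly independent. -/
theorem stmt_8 (d N : ℕ) (hd : 2 ≤ d) (hN : 1 ≤ N) (hNd : N ≤ max 2 (d - 1)) :
    LinearIndependent ℂ (op8 d N) := by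
  classical
  have hNd' : N ≤ d := hNd.trans (max_le hd (Nat.sub_le d 1))
  have hcardk : ∀ k₀ : Fin N, Fintype.card {x : Fin N // x ≠ k₀} = N - 1 := by
    intro k₀
    have : Fintype.card {x : Fin N // x ≠ k₀}
        = Fintype.card (Fin N) - Fintype.card {x : Fin N // x = k₀} :=
      Fintype.card_subtype_compl (fun x => x = k₀)
    rw [this, Fintype.card_fin, Fintype.card_subtype_eq]
  rw [Fintype.linearIndependent_iff]
  intro g hg t₀
  obtain ⟨k₀, l₀, α, β, γ, δ⟩ := t₀
  -- choose a outside the range of α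
  obtain ⟨a, ha⟩ : ∃ a : Fin d, ∀ s : {x : Fin N // x ≠ k₀}, α s ≠ a := by
    by_contra hc
    push_neg at hc
    have hsurj : Function.Surjective α := fun a => hc a
    have hcard := Fintype.card_le_of_surjective α hsurj
    rw [Fintype.card_fin, hcardk k₀] at hcard
    omega
  -- choose (b, v) with b ≠ a avoiding all (β s, δ s)
  obtain ⟨⟨b, v⟩, hbv⟩ : ∃ p : Fin d × Fin d,
      (∀ s : {x : Fin N // x ≠ l₀}, (β s, δ s) ≠ p) ∧ p.1 ≠ a := by
    by_contra hc
    push_neg at hc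
    set F : ({x : Fin N // x ≠ l₀} ⊕ Fin d) → Fin d × Fin d :=
      fun q => match q with
        | Sum.inl s => (β s, δ s)
        | Sum.inr j => (a, j) with hF
    have hsurj : Function.Surjective F := by
      intro p
      by_cases hp : ∀ s : {x : Fin N // x ≠ l₀}, (β s, δ s) ≠ p
      · have h1 : p.1 = a := hc p hp
        exact ⟨Sum.inr p.2, by simp [hF, ← h1]⟩
      · push_neg at hp
        obtain ⟨s, hs⟩ := hp
        exact ⟨Sum.inl s, hs⟩
    have hcard := Fintype.card_le_of_surjective F hsurj
    rw [Fintype.card_prod, Fintype.card_sum, Fintype.card_fin, hcardk l₀] at hcard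
    have h1 : d * d ≤ 2 * d - 1 := by omega
    have h2 : 2 * d ≤ d * d := Nat.mul_le_mul_right d hd
    omega
  obtain ⟨hβδ, hb⟩ := hbv
  simp only at hb
  -- the evaluation point
  set h : Fin N → Fin d := fun k => if hk : k = k₀ then a else α ⟨k, hk⟩ with hh
  set h' : Fin N → Fin d := fun l => if hl : l = l₀ then b else β ⟨l, hl⟩ with hh'
  set w : Fin N → Fin d := fun k => if hk : k = k₀ then v else γ ⟨k, hk⟩ with hw
  set w' : Fin N → Fin d := fun l => if hl : l = l₀ then v else δ ⟨l, hl⟩ with hw'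
  have hhk₀ : h k₀ = a := by simp [hh]
  have hh'l₀ : h' l₀ = b := by simp [hh']
  have hwk₀ : w k₀ = v := by simp [hw]
  have hw'l₀ : w' l₀ = v := by simp [hw']
  have hhs : ∀ s : {x : Fin N // x ≠ k₀}, h s.1 = α s := fun s => ext_apply_ne a α s
  have hh's : ∀ s : {x : Fin N // x ≠ l₀}, h' s.1 = β s := fun s => ext_apply_ne b β s
  have hws : ∀ s : {x : Fin N // x ≠ k₀}, w s.1 = γ s := fun s => ext_apply_ne v γ s
  have hw's : ∀ s : {x : Fin N // x ≠ l₀}, w' s.1 = δ s := fun s => ext_apply_ne v δ s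
  have key : ∑ t, g t * op8 d N t (a, h, w) (b, h', w') = 0 := by
    have := congrArg (fun M : Matrix (Fin d × (Fin N → Fin d) × (Fin N → Fin d))
        (Fin d × (Fin N → Fin d) × (Fin N → Fin d)) ℂ => M (a, h, w) (b, h', w')) hg
    simpa [Matrix.sum_apply] using this
  -- value at t₀ is 1
  have h0 : op8 d N ⟨k₀, l₀, α, β, γ, δ⟩ (a, h, w) (b, h', w') = 1 := by
    show ((if a = h k₀ ∧ b = h' l₀ then 1 else 0) -
          ((d : ℂ))⁻¹ * (if a = b ∧ h k₀ = h' l₀ then 1 else 0)) *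
        (if w k₀ = w' l₀ then 1 else 0) *
        (if (∀ s : {x : Fin N // x ≠ k₀}, h s.1 = α s) ∧
            (∀ s : {x : Fin N // x ≠ l₀}, h' s.1 = β s) ∧
            (∀ s : {x : Fin N // x ≠ k₀}, w s.1 = γ s) ∧
            (∀ s : {x : Fin N // x ≠ l₀}, w' s.1 = δ s) then 1 else 0) = 1
    rw [if_pos ⟨hhk₀.symm, hh'l₀.symm⟩, if_neg (fun hab => hb hab.1.symm),
        if_pos (hwk₀.trans hw'l₀.symm), if_pos ⟨hhs, hh's, hws, hw's⟩]
    ring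
  -- all other terms vanish
  have hterm : ∀ t, t ≠ (⟨k₀, l₀, α, β, γ, δ⟩ : Σ k : Fin N, Σ l : Fin N,
      ({x : Fin N // x ≠ k} → Fin d) × ({x : Fin N // x ≠ l} → Fin d) ×
      ({x : Fin N // x ≠ k} → Fin d) × ({x : Fin N // x ≠ l} → Fin d)) →
      op8 d N t (a, h, w) (b, h', w') = 0 := by
    rintro ⟨k, l, α', β', γ', δ'⟩ ht
    show ((if a = h k ∧ b = h' l then 1 else 0) -
          ((d : ℂ))⁻¹ * (if a = b ∧ h k = h' l then 1 else 0)) *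
        (if w k = w' l then 1 else 0) *
        (if (∀ s : {x : Fin N // x ≠ k}, h s.1 = α' s) ∧
            (∀ s : {x : Fin N // x ≠ l}, h' s.1 = β' s) ∧
            (∀ s : {x : Fin N // x ≠ k}, w s.1 = γ' s) ∧
            (∀ s : {x : Fin N // x ≠ l}, w' s.1 = δ' s) then 1 else 0) = 0
    have hab : ¬(a = b ∧ h k = h' l) := fun hc => hb hc.1.symm
    rcases eq_or_ne k k₀ with hk | hk
    · subst hk
      rcases eq_or_ne l l₀ with hl | hl
      · subst hl
        have hne : ¬((∀ s : {x : Fin N // x ≠ k}, h s.1 = α' s) ∧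
            (∀ s : {x : Fin N // x ≠ l}, h' s.1 = β' s) ∧
            (∀ s : {x : Fin N // x ≠ k}, w s.1 = γ' s) ∧
            (∀ s : {x : Fin N // x ≠ l}, w' s.1 = δ' s)) := by
          rintro ⟨h1, h2, h3, h4⟩
          apply ht
          have e1 : α' = α := funext fun s => (h1 s).symm.trans (hhs s)
          have e2 : β' = β := funext fun s => (h2 s).symm.trans (hh's s)
          have e3 : γ' = γ := funext fun s => (h3 s).symm.trans (hws s)
          have e4 : δ' = δ := funext fun s => (h4 s).symm.trans (hw's s)
          rw [e1, e2, e3, e4]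
        rw [if_neg hne, mul_zero]
      · -- k = k₀, l ≠ l₀
        have hh'l : h' l = β ⟨l, hl⟩ := hh's ⟨l, hl⟩
        rcases eq_or_ne (β ⟨l, hl⟩) b with hbl | hbl
        · -- middle factor vanishes
          have hδ : δ ⟨l, hl⟩ ≠ v := by
            intro hv
            exact hβδ ⟨l, hl⟩ (by rw [hbl, hv])
          have : ¬ (w k = w' l) := by
            rw [hwk₀, hw's ⟨l, hl⟩]
            exact fun hc => hδ hc.symm
          rw [if_neg this, mul_zero, zero_mul]
        · have : ¬(a = h k ∧ b = h' l) := by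
            rintro ⟨-, h2⟩
            exact hbl (hh'l.symm.trans h2.symm)
          rw [if_neg this, if_neg hab, mul_zero, sub_zero, zero_mul, zero_mul]
    · -- k ≠ k₀ : first factor vanishes
      have : ¬(a = h k ∧ b = h' l) := by
        rintro ⟨h1, -⟩
        exact ha ⟨k, hk⟩ ((hhs ⟨k, hk⟩).symm.trans h1.symm)
      rw [if_neg this, if_neg hab, mul_zero, sub_zero, zero_mul, zero_mul]
  have hsum : ∑ t, g t * op8 d N t (a, h, w) (b, h', w')
      = g ⟨k₀, l₀, α, β, γ, δ⟩ := by
    rw [Finset.sum_eq_single (⟨k₀, l₀, α, β, γ, δ⟩ : Σ k : Fin N, Σ l : Fin N,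
      ({x : Fin N // x ≠ k} → Fin d) × ({x : Fin N // x ≠ l} → Fin d) ×
      ({x : Fin N // x ≠ k} → Fin d) × ({x : Fin N // x ≠ l} → Fin d))]
    · rw [h0, mul_one]
    · intro t _ ht
      rw [hterm t ht, mul_zero]
    · intro hmem
      exact absurd (Finset.mem_univ _) hmem
  exact hsum.symm.trans key
end

section
/- For any two distinct non-identity n-qubit Pauli operators σ_E and σ_F, there exists an n-qubit Pauli operator σ_Q such that both σ_E σ_Q and σ_F σ_Q are equal to +i or −i times an n-qubit Pauli operator. -/
/-- The four one-qubit Pauli matrices. -/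
noncomputable def pauli1 : Fin 4 → Matrix (Fin 2) (Fin 2) ℂ
  | 0 => !![1, 0; 0, 1]
  | 1 => !![0, 1; 1, 0]
  | 2 => !![0, -Complex.I; Complex.I, 0]
  | 3 => !![1, 0; 0, -1]

/-- The `n`-qubit Pauli operator `σ_r = σ_{r_1} ⊗ ⋯ ⊗ σ_{r_n}`. -/
noncomputable def pauli {n : ℕ} (r : Fin n → Fin 4) :
    Matrix (Fin n → Fin 2) (Fin n → Fin 2) ℂ :=
  fun x y => ∏ i, pauli1 (r i) (x i) (y i)

/-- The index of the product of two one-qubit Paulis. -/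
def m4 : Fin 4 → Fin 4 → Fin 4
  | 0, 0 => 0 | 0, 1 => 1 | 0, 2 => 2 | 0, 3 => 3
  | 1, 0 => 1 | 1, 1 => 0 | 1, 2 => 3 | 1, 3 => 2
  | 2, 0 => 2 | 2, 1 => 3 | 2, 2 => 0 | 2, 3 => 1
  | 3, 0 => 3 | 3, 1 => 2 | 3, 2 => 1 | 3, 3 => 0

/-- The phase of the product of two one-qubit Paulis. -/
noncomputable def ph : Fin 4 → Fin 4 → ℂ
  | 0, 0 => 1 | 0, 1 => 1 | 0, 2 => 1 | 0, 3 => 1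
  | 1, 0 => 1 | 1, 1 => 1 | 1, 2 => Complex.I | 1, 3 => -Complex.I
  | 2, 0 => 1 | 2, 1 => -Complex.I | 2, 2 => 1 | 2, 3 => Complex.I
  | 3, 0 => 1 | 3, 1 => Complex.I | 3, 2 => -Complex.I | 3, 3 => 1

lemma pauli1_mul (a b : Fin 4) :
    pauli1 a * pauli1 b = ph a b • pauli1 (m4 a b) := by
  fin_cases a <;> fin_cases b <;>
    · ext i j
      fin_cases i <;> fin_cases j <;>
        simp [pauli1, ph, m4, Matrix.mul_apply, Fin.sum_univ_two, Complex.I_mul_I]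

lemma pauli_mul {n : ℕ} (r s : Fin n → Fin 4) :
    pauli r * pauli s = (∏ i, ph (r i) (s i)) • pauli (fun i => m4 (r i) (s i)) := by
  ext x y
  have h1 : (pauli r * pauli s) x y
      = ∑ z : Fin n → Fin 2, ∏ i, (pauli1 (r i) (x i) (z i) * pauli1 (s i) (z i) (y i)) := by
    simp [Matrix.mul_apply, pauli, Finset.prod_mul_distrib]
  rw [h1]
  have h2 : ∑ z : Fin n → Fin 2, ∏ i, (pauli1 (r i) (x i) (z i) * pauli1 (s i) (z i) (y i))
      = ∏ i, ∑ t : Fin 2, pauli1 (r i) (x i) t * pauli1 (s i) t (y i) := by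
    rw [Finset.prod_univ_sum]
    simp [Fintype.piFinset_univ]
  rw [h2]
  have h3 : ∀ i, (∑ t : Fin 2, pauli1 (r i) (x i) t * pauli1 (s i) t (y i))
      = ph (r i) (s i) * pauli1 (m4 (r i) (s i)) (x i) (y i) := by
    intro i
    have := congrFun (congrFun (pauli1_mul (r i) (s i)) (x i)) (y i)
    simpa [Matrix.mul_apply] using this
  simp only [h3]
  rw [Finset.prod_mul_distrib]
  simp [pauli]

lemma ph_right_zero (a : Fin 4) : ph a 0 = 1 := by fin_cases a <;> rfl

lemma ph_left_zero (b : Fin 4) : ph 0 b = 1 := by fin_cases b <;> rfl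

lemma ph_pm {a b : Fin 4} (ha : a ≠ 0) (hb : b ≠ 0) (hab : a ≠ b) :
    ph a b = Complex.I ∨ ph a b = -Complex.I := by
  fin_cases a <;> fin_cases b <;> simp_all [ph]

lemma pick3 (a b : Fin 4) : ∃ q : Fin 4, q ≠ 0 ∧ q ≠ a ∧ q ≠ b := by
  revert a b; decide

lemma main_half {n : ℕ} (r rQ : Fin n → Fin 4) (j : Fin n)
    (hj : ph (r j) (rQ j) = Complex.I ∨ ph (r j) (rQ j) = -Complex.I)
    (ho : ∀ i, i ≠ j → ph (r i) (rQ i) = 1) :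
    ∃ c : ℂ, (c = Complex.I ∨ c = -Complex.I) ∧
      ∃ w : Fin n → Fin 4, pauli r * pauli rQ = c • pauli w := by
  refine ⟨ph (r j) (rQ j), hj, fun i => m4 (r i) (rQ i), ?_⟩
  rw [pauli_mul, Finset.prod_eq_single j (fun i _ hi => ho i hi) (by simp)]

/-- for any two distinct non-identity `n`-qubit Pauli operators `σ_E, σ_F`,
there is an `n`-qubit Pauli operator `σ_Q` such that both `σ_E σ_Q` and `σ_F σ_Q`
equal `+i` or `−i` times an `n`-qubit Pauli operator. -/
theorem stmt_12 (n : ℕ) (rE rF : Fin n → Fin 4)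
    (hE : rE ≠ fun _ => 0) (hF : rF ≠ fun _ => 0) (hEF : rE ≠ rF) :
    ∃ rQ : Fin n → Fin 4,
      (∃ c : ℂ, (c = Complex.I ∨ c = -Complex.I) ∧
        ∃ w : Fin n → Fin 4, pauli rE * pauli rQ = c • pauli w) ∧
      (∃ c : ℂ, (c = Complex.I ∨ c = -Complex.I) ∧
        ∃ w : Fin n → Fin 4, pauli rF * pauli rQ = c • pauli w) := by
  obtain ⟨j, hj⟩ := Function.ne_iff.mp hE
  obtain ⟨k, hk⟩ := Function.ne_iff.mp hF
  by_cases hcase : ∃ l, rE l ≠ 0 ∧ rF l ≠ 0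
  · obtain ⟨l, hl1, hl2⟩ := hcase
    obtain ⟨q, hq0, hqE, hqF⟩ := pick3 (rE l) (rF l)
    refine ⟨fun i => if i = l then q else 0, ?_, ?_⟩
    · refine main_half _ _ l ?_ ?_
      · rw [if_pos rfl]
        exact ph_pm hl1 hq0 fun h => hqE h.symm
      · intro i hi; simp [if_neg hi, ph_right_zero]
    · refine main_half _ _ l ?_ ?_
      · rw [if_pos rfl]
        exact ph_pm hl2 hq0 fun h => hqF h.symm
      · intro i hi; simp [if_neg hi, ph_right_zero]
  · push_neg at hcase
    have hFj : rF j = 0 := hcase j hj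
    have hEk : rE k = 0 := by
      by_contra h; exact hk (hcase k h)
    have hjk : j ≠ k := fun h => hj (h ▸ hEk)
    obtain ⟨qj, hqj0, hqjE, -⟩ := pick3 (rE j) (rE j)
    obtain ⟨qk, hqk0, hqkF, -⟩ := pick3 (rF k) (rF k)
    refine ⟨fun i => if i = j then qj else if i = k then qk else 0, ?_, ?_⟩
    · refine main_half _ _ j ?_ ?_
      · rw [if_pos rfl]
        exact ph_pm hj hqj0 fun h => hqjE h.symm
      · intro i hi
        by_cases hik : i = k
        · subst hik; simp [if_neg hi, hEk, ph_left_zero]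
        · simp [if_neg hi, if_neg hik, ph_right_zero]
    · refine main_half _ _ k ?_ ?_
      · rw [if_neg (Ne.symm hjk), if_pos rfl]
        exact ph_pm hk hqk0 fun h => hqkF h.symm
      · intro i hi
        by_cases hij : i = j
        · subst hij; simp [hFj, ph_left_zero]
        · simp [if_neg hij, if_neg hi, ph_right_zero]
end
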